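/- For any complex number w, any n ≥ 3, and any k ∈ {0,…,n−1}, the k-th Fourier polygon f_k := (r^{0·k}, r^{1·k}, …, r^{(n−1)·k})ᵗ with r := exp(2πi/n) is an eigenvector of the transformation matrix M, with eigenvalue |(1−w) + w·r^{−k}|²; in particular all eigenvalues of M are real and nonnegative. -/

import Mathlib

open Complex

/-- The matrix `M` of the composed polygon transformation: diagonal entries
`|1−w|² + |w|²`, entry `w(1−w̄)` at `(j,k)` with `j = k+1 (mod n)`, entry
`w̄(1−w)` at `(j,k)` with `k = j+1 (mod n)`, and `0` otherwise. -/
noncomputable def transMatrix (n : ℕ) (w : ℂ) : Matrix (ZMod n) (ZMod n) ℂ :=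
  Matrix.of fun j k =>
    if j = k then (((‖1 - w‖) ^ 2 + (‖w‖) ^ 2 : ℝ) : ℂ)
    else if j = k + 1 then w * (1 - (starRingEnd ℂ) w)
    else if k = j + 1 then (starRingEnd ℂ) w * (1 - w)
    else 0

/-- The `k`-th Fourier polygon `f_k = (r^{0·k}, …, r^{(n−1)·k})ᵗ` with
`r = exp(2πi/n)`. -/
noncomputable def fourierPolygon (n k : ℕ) : ZMod n → ℂ :=
  fun j => Complex.exp (2 * Real.pi * Complex.I / n) ^ (j.val * k)

/-!
The matrix `M` is circulant on `ZMod n`: `M j k` depends only on `j - k`, through the stencil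
`(|1-w|² + |w|², w(1-w̄), w̄(1-w))` at offsets `0, 1, -1`. Circulant matrices are diagonalised
by the additive characters: `circulant v` has eigenvector `ψ` with eigenvalue
`∑ d, v d * ψ (-d)`. The Fourier polygon `f_k` is the character `j ↦ (r^k)^j`, and since
`|r| = 1` its eigenvalue `|1-w|² + |w|² + w(1-w̄) r^{-k} + w̄(1-w) r^k` factors as
`|(1-w) + w r^{-k}|²`.
-/

namespace Matrix

theorem circulant_mulVec_addChar {G R : Type*} [AddCommGroup G] [Fintype G] [CommSemiring R]
    (v : G → R) (ψ : AddChar G R) :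
    circulant v *ᵥ ⇑ψ = (∑ d, v d * ψ (-d)) • ⇑ψ := by
  ext j
  rw [mulVec, dotProduct, Pi.smul_apply, smul_eq_mul, Finset.sum_mul]
  refine Fintype.sum_equiv (Equiv.subLeft j) _ _ fun i => ?_
  rw [circulant_apply, Equiv.subLeft_apply, mul_assoc, ← AddChar.map_add_eq_mul, neg_sub,
    sub_add_cancel]

end Matrix

noncomputable def transStencil (n : ℕ) (w : ℂ) : ZMod n → ℂ := fun d =>
  if d = 0 then (((‖1 - w‖) ^ 2 + (‖w‖) ^ 2 : ℝ) : ℂ)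
  else if d = 1 then w * (1 - (starRingEnd ℂ) w)
  else if d = -1 then (starRingEnd ℂ) w * (1 - w)
  else 0

theorem transMatrix_eq_circulant (n : ℕ) (w : ℂ) :
    transMatrix n w = Matrix.circulant (transStencil n w) := by
  ext j k
  have h_self : j = k ↔ j - k = 0 := sub_eq_zero.symm
  have h_prev : j = k + 1 ↔ j - k = 1 := sub_eq_iff_eq_add'.symm
  have h_next : k = j + 1 ↔ j - k = -1 := by rw [← neg_sub, neg_inj, sub_eq_iff_eq_add']
  simp only [transMatrix, transStencil, Matrix.of_apply, Matrix.circulant_apply, h_self, h_prev,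
    h_next]

theorem sum_transStencil_mul (n : ℕ) [NeZero n] (hn : 3 ≤ n) (w : ℂ) (f : ZMod n → ℂ) :
    ∑ d, transStencil n w d * f d =
      (((‖1 - w‖) ^ 2 + (‖w‖) ^ 2 : ℝ) : ℂ) * f 0 + w * (1 - (starRingEnd ℂ) w) * f 1
        + (starRingEnd ℂ) w * (1 - w) * f (-1) := by
  have : Fact (1 < n) := ⟨by omega⟩
  have : Fact (2 < n) := ⟨hn⟩
  have h_one : (1 : ZMod n) ≠ 0 := one_ne_zero
  have h_neg_one : (-1 : ZMod n) ≠ 0 := neg_ne_zero.mpr h_one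
  have h_neg_one_one : (-1 : ZMod n) ≠ 1 := ZMod.neg_one_ne_one
  rw [← Finset.sum_subset (Finset.subset_univ {0, 1, -1}),
    Finset.sum_insert (by simp [h_one.symm, h_neg_one.symm]),
    Finset.sum_insert (by simp [h_neg_one_one.symm]), Finset.sum_singleton]
  · simp [transStencil, h_one, h_neg_one, h_neg_one_one, add_assoc]
  · intro d _ hd
    simp only [Finset.mem_insert, Finset.mem_singleton, not_or] at hd
    simp [transStencil, hd.1, hd.2.1, hd.2.2]

theorem ofReal_norm_one_sub_add_mul_sq (w ζ : ℂ) (hζ : ‖ζ‖ = 1) :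
    (((‖1 - w + w * ζ‖) ^ 2 : ℝ) : ℂ) =
      (((‖1 - w‖) ^ 2 + (‖w‖) ^ 2 : ℝ) : ℂ) + w * (1 - (starRingEnd ℂ) w) * ζ
        + (starRingEnd ℂ) w * (1 - w) * ζ⁻¹ := by
  have hζ_mul_conj : ζ * (starRingEnd ℂ) ζ = 1 := by simp [Complex.mul_conj', hζ]
  push_cast
  rw [Complex.inv_eq_conj hζ, ← Complex.mul_conj', ← Complex.mul_conj', ← Complex.mul_conj']
  simp only [map_add, map_sub, map_mul, map_one]
  linear_combination (w * (starRingEnd ℂ) w) * hζ_mul_conj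

theorem fourierPolygon_eigenvector_general (n : ℕ) [NeZero n] (hn : 3 ≤ n) (w : ℂ)
    (k : ℕ) :
    (transMatrix n w).mulVec (fourierPolygon n k) =
      (((‖(1 - w) + w * Complex.exp (2 * Real.pi * Complex.I / n) ^ (-(k : ℤ))‖) ^ 2
        : ℝ) : ℂ) • fourierPolygon n k ∧
    (0 : ℝ) ≤
      (‖(1 - w) + w * Complex.exp (2 * Real.pi * Complex.I / n) ^ (-(k : ℤ))‖) ^ 2 := by
  set r := Complex.exp (2 * Real.pi * Complex.I / n)
  have hr : r ^ n = 1 := (Complex.isPrimitiveRoot_exp n (NeZero.ne n)).pow_eq_one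
  have hrk : (r ^ k) ^ n = 1 := by rw [pow_right_comm, hr, one_pow]
  set ψ := AddChar.zmodChar n hrk
  have hf : fourierPolygon n k = ψ := funext fun j => pow_mul' r j.val k
  have hψ : ψ (-1) = r ^ (-(k : ℤ)) := by
    rw [AddChar.map_neg_eq_inv, ← Nat.cast_one, AddChar.zmodChar_apply', pow_one, zpow_neg,
      zpow_natCast]
  have hnorm : ‖r ^ (-(k : ℤ))‖ = 1 := by
    rw [norm_zpow, norm_eq_one_of_pow_eq_one hr (NeZero.ne n), one_zpow]
  refine ⟨?_, sq_nonneg _⟩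
  rw [hf, transMatrix_eq_circulant, Matrix.circulant_mulVec_addChar, sum_transStencil_mul n hn,
    neg_zero, neg_neg, AddChar.map_zero_eq_one, mul_one, ← inv_inv (ψ 1),
    ← AddChar.map_neg_eq_inv, hψ, ofReal_norm_one_sub_add_mul_sq w _ hnorm]

/-- The `k`-th Fourier polygon is an eigenvector of `M` with the real
nonnegative eigenvalue `|(1−w) + w·r^{−k}|²`. -/
theorem fourierPolygon_eigenvector (n : ℕ) [NeZero n] (hn : 3 ≤ n) (w : ℂ)
    (k : ℕ) (hk : k < n) :
    (transMatrix n w).mulVec (fourierPolygon n k) =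
      (((‖(1 - w) + w * Complex.exp (2 * Real.pi * Complex.I / n) ^ (-(k : ℤ))‖) ^ 2
        : ℝ) : ℂ) • fourierPolygon n k ∧
    (0 : ℝ) ≤
      (‖(1 - w) + w * Complex.exp (2 * Real.pi * Complex.I / n) ^ (-(k : ℤ))‖) ^ 2 :=
  fourierPolygon_eigenvector_general n hn w k
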